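/- Let Φ : ℝ → ℝ be a continuously differentiable bijection whose derivative φ = Φ' satisfies φ(λ) < 0 for all λ ∈ ℝ, and let Φ⁻¹ denote its inverse. Let b, c : ℝ → ℝ be differentiable at a point t, and define H(s) = Φ⁻¹( Φ(b(s)) - c(s)·|c(s)| / 2 ). Then H is differentiable at t and H'(t) = ( φ(b(t))·b'(t) - |c(t)|·c'(t) ) / φ(H(t)). Moreover, if in addition b'(t) ≤ c(t) and c'(t) ≤ φ(b(t)), then H'(t) ≤ 0. -/

import Mathlib

lemma hasDerivAt_mul_abs (x : ℝ) : HasDerivAt (fun y : ℝ => y * |y|) (2 * |x|) x := by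
  rcases lt_trichotomy x 0 with hx | hx | hx
  · have h : HasDerivAt (fun y : ℝ => -(y * y)) (2 * |x|) x := by
      have h0 := ((hasDerivAt_id x).mul (hasDerivAt_id x)).neg
      refine h0.congr_deriv ?_
      simp [abs_of_neg hx]; ring
    refine h.congr_of_eventuallyEq ?_
    filter_upwards [eventually_lt_nhds hx] with y hy
    simp [abs_of_neg hy]
  · subst hx
    rw [hasDerivAt_iff_tendsto_slope]
    simp only [abs_zero, mul_zero]
    have habs : Filter.Tendsto (fun y : ℝ => |y|) (nhdsWithin 0 {0}ᶜ) (nhds 0) := by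
      simpa using (continuous_abs.tendsto (0:ℝ)).mono_left nhdsWithin_le_nhds
    refine Filter.Tendsto.congr' ?_ habs
    filter_upwards [self_mem_nhdsWithin] with y hy
    have hy' : (y : ℝ) ≠ 0 := hy
    rw [slope_def_field]
    field_simp
    ring
  · have h : HasDerivAt (fun y : ℝ => y * y) (2 * |x|) x := by
      have h0 := (hasDerivAt_id x).mul (hasDerivAt_id x)
      refine h0.congr_deriv ?_
      simp [abs_of_pos hx]; ring
    refine h.congr_of_eventuallyEq ?_
    filter_upwards [eventually_gt_nhds hx] with y hy
    simp [abs_of_pos hy]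

/-- Derivative of the variable-control-authority barrier
`H = Φ⁻¹(Φ(b) - c|c|/2)`: by the inverse function theorem,
`H' = (φ(b) b' - |c| c') / φ(H)`, and `H' ≤ 0` whenever `b' ≤ c` and
`c' ≤ φ(b)`. -/
theorem variable_authority_barrier_deriv
    (Φ : ℝ → ℝ) (hΦsmooth : ContDiff ℝ 1 Φ) (hΦbij : Function.Bijective Φ)
    (hφneg : ∀ l : ℝ, deriv Φ l < 0)
    (b c : ℝ → ℝ) (t : ℝ) (b' c' : ℝ)
    (hb : HasDerivAt b b' t) (hc : HasDerivAt c c' t) :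
    HasDerivAt (fun s => Function.invFun Φ (Φ (b s) - c s * |c s| / 2))
      ((deriv Φ (b t) * b' - |c t| * c') /
        deriv Φ (Function.invFun Φ (Φ (b t) - c t * |c t| / 2))) t ∧
    (b' ≤ c t → c' ≤ deriv Φ (b t) →
      (deriv Φ (b t) * b' - |c t| * c') /
        deriv Φ (Function.invFun Φ (Φ (b t) - c t * |c t| / 2)) ≤ 0) := by
  have hΦdiff : Differentiable ℝ Φ := hΦsmooth.differentiable one_ne_zero
  have hanti : StrictAnti Φ :=
    strictAnti_of_deriv_neg (fun x => hφneg x)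
  -- continuity of the inverse
  have hmono : StrictMono (fun x : ℝ => Φ (-x)) := fun a b hab => hanti (neg_lt_neg hab)
  have hsurj : Function.Surjective (fun x : ℝ => Φ (-x)) := fun y => by
    obtain ⟨x, hx⟩ := hΦbij.2 y
    exact ⟨-x, by simpa using hx⟩
  let iso := StrictMono.orderIsoOfSurjective _ hmono hsurj
  have hiso : ∀ x, iso x = Φ (-x) := fun x => rfl
  have hinv : ∀ y, Function.invFun Φ y = -(iso.symm y) := by
    intro y
    apply hΦbij.1
    rw [Function.invFun_eq (hΦbij.2 y)]
    have := iso.apply_symm_apply y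
    rw [hiso] at this
    simpa using this.symm
  have hcont : Continuous (Function.invFun Φ) := by
    have : Continuous fun y => -(iso.symm y) := iso.symm.continuous.neg
    simpa [funext hinv] using this
  have key : ∀ a : ℝ, HasDerivAt (Function.invFun Φ)
      ((deriv Φ (Function.invFun Φ a))⁻¹) a := fun a =>
    HasDerivAt.of_local_left_inverse hcont.continuousAt
      (hΦdiff _).hasDerivAt (ne_of_lt (hφneg _))
      (Filter.Eventually.of_forall fun y => Function.invFun_eq (hΦbij.2 y))
  set u : ℝ → ℝ := fun s => Φ (b s) - c s * |c s| / 2 with hu_def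
  have h1 : HasDerivAt (fun s => Φ (b s)) (deriv Φ (b t) * b') t :=
    ((hΦdiff (b t)).hasDerivAt).comp t hb
  have h2 : HasDerivAt (fun s => c s * |c s|) (2 * |c t| * c') t :=
    (hasDerivAt_mul_abs (c t)).comp t hc
  have hu : HasDerivAt u (deriv Φ (b t) * b' - |c t| * c') t := by
    have := h1.sub (h2.div_const 2)
    refine this.congr_deriv ?_
    ring
  have hmain : HasDerivAt (fun s => Function.invFun Φ (u s))
      ((deriv Φ (Function.invFun Φ (u t)))⁻¹ * (deriv Φ (b t) * b' - |c t| * c')) t :=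
    (key (u t)).comp t hu
  constructor
  · simpa [hu_def, div_eq_inv_mul] using hmain
  · intro hb' hc'
    have hnum : 0 ≤ deriv Φ (b t) * b' - |c t| * c' := by
      have hφb : deriv Φ (b t) < 0 := hφneg _
      have h1 : deriv Φ (b t) * c t ≤ deriv Φ (b t) * b' :=
        mul_le_mul_of_nonpos_left hb' hφb.le
      rcases le_or_gt 0 (c t) with hct | hct
      · have : |c t| * c' ≤ |c t| * deriv Φ (b t) :=
          mul_le_mul_of_nonneg_left hc' (abs_nonneg _)
        rw [abs_of_nonneg hct] at this ⊢
        nlinarith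
      · have hc'neg : c' < 0 := lt_of_le_of_lt hc' hφb
        rw [abs_of_neg hct]
        nlinarith
    have hden : deriv Φ (Function.invFun Φ (Φ (b t) - c t * |c t| / 2)) < 0 := hφneg _
    exact div_nonpos_of_nonneg_of_nonpos hnum hden.le
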